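/- Let α > 0, η = α/(α+i), and Q(x) = 2(eˣ + ηe^{−x})/(e^{2x} + 2 + |η|²e^{−2x}). Then Q satisfies Q''' + 9QQ̄Q' + 3Q²Q̄' − Q' + 3iα(Q'' − Q + 2Q²Q̄) = 0 pointwise on ℝ. -/

import Mathlib

open Complex Polynomial

/-- `η = α/(α + i)` (the case `β = 1`). -/
noncomputable def etaSS1 (α : ℝ) : ℂ := (α : ℂ) / ((α : ℂ) + Complex.I)

/-- The Sasa–Satsuma profile with `β = 1`:
`Q(x) = 2(eˣ + ηe^{-x})/(e^{2x} + 2 + |η|²e^{-2x})`. -/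
noncomputable def QSS1 (α : ℝ) (x : ℝ) : ℂ :=
  2 * (Complex.exp (x : ℂ) + etaSS1 α * Complex.exp (-(x : ℂ))) /
    (Complex.exp (2 * (x : ℂ)) + 2
      + (Complex.normSq (etaSS1 α) : ℂ) * Complex.exp (-(2 * (x : ℂ))))


noncomputable def qP (α : ℝ) : Polynomial ℂ := C ((1)*((α:ℝ) : ℂ)^2) + C ((2) + (2)*((α:ℝ) : ℂ)^2) * X^2 + C ((1) + (1)*((α:ℝ) : ℂ)^2) * X^4

noncomputable def pP (α : ℝ) : ℕ → Polynomial ℂ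
  | 0 => C ((-2)*((α:ℝ) : ℂ)*Complex.I + (2)*((α:ℝ) : ℂ)^2) * X + C ((2) + (2)*((α:ℝ) : ℂ)^2) * X^3
  | 1 => C ((-2)*((α:ℝ) : ℂ)^3*Complex.I + (2)*((α:ℝ) : ℂ)^4) * X + C ((4)*((α:ℝ) : ℂ)*Complex.I + (2)*((α:ℝ) : ℂ)^2 + (4)*((α:ℝ) : ℂ)^3*Complex.I + (2)*((α:ℝ) : ℂ)^4) * X^3 + C ((4) + (6)*((α:ℝ) : ℂ)*Complex.I + (2)*((α:ℝ) : ℂ)^2 + (6)*((α:ℝ) : ℂ)^3*Complex.I + (-2)*((α:ℝ) : ℂ)^4) * X^5 + C ((-2) + (-4)*((α:ℝ) : ℂ)^2 + (-2)*((α:ℝ) : ℂ)^4) * X^7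
  | 2 => C ((-2)*((α:ℝ) : ℂ)^5*Complex.I + (2)*((α:ℝ) : ℂ)^6) * X + C ((24)*((α:ℝ) : ℂ)^3*Complex.I + (-6)*((α:ℝ) : ℂ)^4 + (24)*((α:ℝ) : ℂ)^5*Complex.I + (-6)*((α:ℝ) : ℂ)^6) * X^3 + C ((-8)*((α:ℝ) : ℂ)*Complex.I + (16)*((α:ℝ) : ℂ)^2 + (28)*((α:ℝ) : ℂ)^3*Complex.I + (-12)*((α:ℝ) : ℂ)^4 + (36)*((α:ℝ) : ℂ)^5*Complex.I + (-28)*((α:ℝ) : ℂ)^6) * X^5 + C ((8) + (-8)*((α:ℝ) : ℂ)*Complex.I + (-12)*((α:ℝ) : ℂ)^2 + (-16)*((α:ℝ) : ℂ)^3*Complex.I + (-48)*((α:ℝ) : ℂ)^4 + (-8)*((α:ℝ) : ℂ)^5*Complex.I + (-28)*((α:ℝ) : ℂ)^6) * X^7 + C ((-24) + (-18)*((α:ℝ) : ℂ)*Complex.I + (-54)*((α:ℝ) : ℂ)^2 + (-36)*((α:ℝ) : ℂ)^3*Complex.I + (-36)*((α:ℝ) : ℂ)^4 + (-18)*((α:ℝ)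 : ℂ)^5*Complex.I + (-6)*((α:ℝ) : ℂ)^6) * X^9 + C ((2) + (6)*((α:ℝ) : ℂ)^2 + (6)*((α:ℝ) : ℂ)^4 + (2)*((α:ℝ) : ℂ)^6) * X^11
  | 3 => C ((-2)*((α:ℝ) : ℂ)^7*Complex.I + (2)*((α:ℝ) : ℂ)^8) * X + C ((92)*((α:ℝ) : ℂ)^5*Complex.I + (-38)*((α:ℝ) : ℂ)^6 + (92)*((α:ℝ) : ℂ)^7*Complex.I + (-38)*((α:ℝ) : ℂ)^8) * X^3 + C ((-184)*((α:ℝ) : ℂ)^3*Complex.I + (116)*((α:ℝ) : ℂ)^4 + (-126)*((α:ℝ) : ℂ)^5*Complex.I + (-10)*((α:ℝ) : ℂ)^6 + (58)*((α:ℝ) : ℂ)^7*Complex.I + (-126)*((α:ℝ) : ℂ)^8) * X^5 + C ((16)*((α:ℝ) : ℂ)*Complex.I + (24)*((α:ℝ) : ℂ)^2 + (-312)*((α:ℝ) : ℂ)^3*Complex.I + (-38)*((α:ℝ) : ℂ)^4 + (-672)*((α:ℝ) : ℂ)^5*Complex.I + (-148)*((α:ℝ) : ℂ)^6 + (-344)*((α:ℝ)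 : ℂ)^7*Complex.I + (-86)*((α:ℝ) : ℂ)^8) * X^7 + C ((16) + (40)*((α:ℝ) : ℂ)*Complex.I + (-336)*((α:ℝ) : ℂ)^2 + (-350)*((α:ℝ) : ℂ)^3*Complex.I + (-634)*((α:ℝ) : ℂ)^4 + (-820)*((α:ℝ) : ℂ)^5*Complex.I + (-196)*((α:ℝ) : ℂ)^6 + (-430)*((α:ℝ) : ℂ)^7*Complex.I + (86)*((α:ℝ) : ℂ)^8) * X^9 + C ((-184) + (-68)*((α:ℝ) : ℂ)*Complex.I + (-426)*((α:ℝ) : ℂ)^2 + (-204)*((α:ℝ) : ℂ)^3*Complex.I + (-174)*((α:ℝ) : ℂ)^4 + (-204)*((α:ℝ) : ℂ)^5*Complex.I + (194)*((α:ℝ) : ℂ)^6 + (-68)*((α:ℝ) : ℂ)^7*Complex.I + (126)*((α:ℝ) : ℂ)^8) * X^11 + C ((92) + (54)*((α:ℝ) : ℂ)*Complex.I + (314)*((α:ℝ) : ℂ)^2 + (162)*((α:ℝ) : ℂ)^3*Complex.I + (390)*((α:ℝ) : ℂ)^4 + (162)*((α:ℝ) : ℂ)^5*Complex.I + (206)*((α:ℝ)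 : ℂ)^6 + (54)*((α:ℝ) : ℂ)^7*Complex.I + (38)*((α:ℝ) : ℂ)^8) * X^13 + C ((-2) + (-8)*((α:ℝ) : ℂ)^2 + (-12)*((α:ℝ) : ℂ)^4 + (-8)*((α:ℝ) : ℂ)^6 + (-2)*((α:ℝ) : ℂ)^8) * X^15
  | _ => 0

noncomputable def RS (α : ℝ) (k : ℕ) (x : ℝ) : ℂ :=
  (pP α k).eval (Complex.exp (x : ℂ)) / ((qP α).eval (Complex.exp (x : ℂ))) ^ (k + 1)


set_option maxHeartbeats 2000000 in
lemma SS_num_zero (c a : ℂ) :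
    (96)*c^3*a^5*Complex.I + (96)*c^3*a^5*Complex.I^3 + (-48)*c^3*a^6 + (48)*c^3*a^6*Complex.I^4 + (-48)*c^3*a^7*Complex.I + (-48)*c^3*a^7*Complex.I^3 + (48)*c^3*a^8 + (48)*c^3*a^8*Complex.I^2 + (-192)*c^5*a^3*Complex.I + (-192)*c^5*a^3*Complex.I^3 + (96)*c^5*a^4 + (192)*c^5*a^4*Complex.I^2 + (96)*c^5*a^4*Complex.I^4 + (-336)*c^5*a^5*Complex.I + (-336)*c^5*a^5*Complex.I^3 + (240)*c^5*a^6 + (336)*c^5*a^6*Complex.I^2 + (96)*c^5*a^6*Complex.I^4 + (-144)*c^5*a^7*Complex.I + (-144)*c^5*a^7*Complex.I^3 + (144)*c^5*a^8 + (144)*c^5*a^8*Complex.I^2 + (-384)*c^7*a^3*Complex.I + (-384)*c^7*a^3*Complex.I^3 + (384)*c^7*a^4 + (432)*c^7*a^4*Complex.I^2 + (48)*c^7*a^4*Complex.I^4 + (-528)*c^7*a^5*Complex.I + (-528)*c^7*a^5*Complex.I^3 + (480)*c^7*a^6 + (528)*c^7*a^6*Complex.I^2 + (48)*c^7*a^6*Complex.I^4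 + (-144)*c^7*a^7*Complex.I + (-144)*c^7*a^7*Complex.I^3 + (96)*c^7*a^8 + (96)*c^7*a^8*Complex.I^2 + (96)*c^9*a^2 + (96)*c^9*a^2*Complex.I^2 + (-48)*c^9*a^3*Complex.I + (-48)*c^9*a^3*Complex.I^3 + (96)*c^9*a^4 + (96)*c^9*a^4*Complex.I^2 + (-96)*c^9*a^5*Complex.I + (-96)*c^9*a^5*Complex.I^3 + (-96)*c^9*a^6 + (-96)*c^9*a^6*Complex.I^2 + (-48)*c^9*a^7*Complex.I + (-48)*c^9*a^7*Complex.I^3 + (-96)*c^9*a^8 + (-96)*c^9*a^8*Complex.I^2 + (-144)*c^11*a^2 + (-144)*c^11*a^2*Complex.I^2 + (-432)*c^11*a^4 + (-432)*c^11*a^4*Complex.I^2 + (-432)*c^11*a^6 + (-432)*c^11*a^6*Complex.I^2 + (-144)*c^11*a^8 + (-144)*c^11*a^8*Complex.I^2 + (-48)*c^13*a^2 + (-48)*c^13*a^2*Complex.I^2 + (-144)*c^13*a^4 + (-144)*c^13*a^4*Complex.I^2 + (-144)*c^13*a^6 + (-144)*c^13*a^6*Complex.I^2 + (-48)*c^13*a^8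 + (-48)*c^13*a^8*Complex.I^2 = 0 := by
  linear_combination ((96)*c^3*a^5*Complex.I + (-48)*c^3*a^6 + (48)*c^3*a^6*Complex.I^2 + (-48)*c^3*a^7*Complex.I + (48)*c^3*a^8 + (-192)*c^5*a^3*Complex.I + (96)*c^5*a^4 + (96)*c^5*a^4*Complex.I^2 + (-336)*c^5*a^5*Complex.I + (240)*c^5*a^6 + (96)*c^5*a^6*Complex.I^2 + (-144)*c^5*a^7*Complex.I + (144)*c^5*a^8 + (-384)*c^7*a^3*Complex.I + (384)*c^7*a^4 + (48)*c^7*a^4*Complex.I^2 + (-528)*c^7*a^5*Complex.I + (480)*c^7*a^6 + (48)*c^7*a^6*Complex.I^2 + (-144)*c^7*a^7*Complex.I + (96)*c^7*a^8 + (96)*c^9*a^2 + (-48)*c^9*a^3*Complex.I + (96)*c^9*a^4 + (-96)*c^9*a^5*Complex.I + (-96)*c^9*a^6 + (-48)*c^9*a^7*Complex.I + (-96)*c^9*a^8 + (-144)*c^11*a^2 + (-432)*c^11*a^4 + (-432)*c^11*a^6 + (-144)*c^11*a^8 + (-48)*c^13*a^2 + (-144)*c^13*a^4 + (-144)*c^13*a^6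 + (-48)*c^13*a^8) * Complex.I_sq

lemma SS_cancel (L N D : ℂ) (hD : D ≠ 0) (h1 : L * D = N) (h2 : N = 0) : L = 0 := by
  rcases mul_eq_zero.mp (h1.trans h2) with h | h
  · exact h
  · exact absurd h hD

lemma SS_key (q p : Polynomial ℂ) (k : ℕ) (z : ℂ) (hq : q.eval (Complex.exp z) ≠ 0) :
    HasDerivAt (fun w => p.eval (Complex.exp w) / (q.eval (Complex.exp w)) ^ (k+1))
      ((X * (p.derivative * q - C ((k:ℂ)+1) * p * q.derivative)).eval (Complex.exp z)
        / (q.eval (Complex.exp z)) ^ (k+2)) z := by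
  have hp1 : HasDerivAt (fun w => p.eval (Complex.exp w))
      (p.derivative.eval (Complex.exp z) * Complex.exp z) z :=
    (p.hasDerivAt (Complex.exp z)).comp z (Complex.hasDerivAt_exp z)
  have hq1 : HasDerivAt (fun w => q.eval (Complex.exp w))
      (q.derivative.eval (Complex.exp z) * Complex.exp z) z :=
    (q.hasDerivAt (Complex.exp z)).comp z (Complex.hasDerivAt_exp z)
  have hq2 := hq1.pow (k+1)
  have hne : (q.eval (Complex.exp z)) ^ (k+1) ≠ 0 := pow_ne_zero _ hq
  have := hp1.div hq2 hne
  simp only [Pi.div_def, Pi.pow_def] at this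
  refine this.congr_deriv ?_
  simp only [eval_mul, eval_sub, eval_add, eval_X, eval_C, Nat.add_sub_cancel, Nat.cast_add, Nat.cast_one]
  field_simp
  ring

lemma SS_him (α : ℝ) : ((α:ℂ) + Complex.I) ≠ 0 := fun h => by simpa using congrArg Complex.im h

lemma SS_h3 (α : ℝ) : ((α:ℂ)^2 + 1) ≠ 0 := by
  have : ((α:ℂ)^2 + 1) = ((α^2 + 1 : ℝ) : ℂ) := by push_cast; ring
  rw [this, Complex.ofReal_ne_zero]; positivity

lemma SS_hm2 (α : ℝ) :
    ((Complex.normSq ((α:ℂ)/((α:ℂ)+Complex.I)) : ℝ) : ℂ) = (α:ℂ)^2/((α:ℂ)^2+1) := by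
  rw [map_div₀]
  have h6 : Complex.normSq ((α:ℂ)+Complex.I) = α^2+1 := by
    simp [Complex.normSq_apply]; ring
  have h7 : Complex.normSq ((α:ℂ)) = α^2 := by simp [Complex.normSq_apply]; ring
  rw [h6, h7]; push_cast; ring

lemma SS_heta2 (α : ℝ) :
    (α:ℂ)/((α:ℂ)+Complex.I) = ((α:ℂ)^2 - (α:ℂ)*Complex.I)/((α:ℂ)^2+1) := by
  rw [div_eq_div_iff (SS_him α) (SS_h3 α)]
  linear_combination (α:ℂ) * Complex.I_sq

lemma SS_hQn (α : ℝ) (x : ℝ) :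
    (((α:ℂ)^2+1) * (((Real.exp x : ℝ) : ℂ)^4 + 2*((Real.exp x : ℝ) : ℂ)^2) + (α:ℂ)^2) ≠ 0 := by
  have h : (((α:ℂ)^2+1) * (((Real.exp x : ℝ) : ℂ)^4 + 2*((Real.exp x : ℝ) : ℂ)^2) + (α:ℂ)^2)
      = (((α^2+1) * ((Real.exp x)^4 + 2*(Real.exp x)^2) + α^2 : ℝ) : ℂ) := by push_cast; ring
  rw [h, Complex.ofReal_ne_zero]
  have hrpos : (0:ℝ) < Real.exp x := Real.exp_pos x
  positivity

lemma SS_qPne (α : ℝ) (x : ℝ) : (qP α).eval (Complex.exp (x : ℂ)) ≠ 0 := by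
  have h : (qP α).eval (Complex.exp (x : ℂ))
      = (((α:ℂ)^2+1) * (((Real.exp x : ℝ) : ℂ)^4 + 2*((Real.exp x : ℝ) : ℂ)^2) + (α:ℂ)^2) := by
    simp only [qP, eval_add, eval_mul, eval_pow, eval_X, eval_C, ← Complex.ofReal_exp]
    ring
  rw [h]
  exact SS_hQn α x

set_option maxHeartbeats 1000000 in
lemma SS_hd0 (α : ℝ) (x : ℝ) : HasDerivAt (RS α 0) (RS α 1 x) x := by
  have h := SS_key (qP α) (pP α 0) 0 (x : ℂ) (SS_qPne α x)
  have hval : (X * ((pP α 0).derivative * qP α - C (((0:ℕ):ℂ)+1) * pP α 0 * (qP α).derivative)).eval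
        (Complex.exp (x : ℂ)) = (pP α 1).eval (Complex.exp (x : ℂ)) := by
    simp only [pP, qP, derivative_add, derivative_mul, derivative_C, derivative_X,
      derivative_X_pow, eval_add, eval_mul, eval_sub, eval_pow, eval_X, eval_C,
      Nat.cast_zero, Nat.cast_one, Nat.cast_ofNat, zero_mul, mul_zero, zero_add, add_zero,
      mul_one, one_mul]
    ring
  rw [hval] at h
  exact h.comp_ofReal

set_option maxHeartbeats 1000000 in
lemma SS_hd1 (α : ℝ) (x : ℝ) : HasDerivAt (RS α 1) (RS α 2 x) x := by
  have h := SS_key (qP α) (pP α 1) 1 (x : ℂ) (SS_qPne α x)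
  have hval : (X * ((pP α 1).derivative * qP α - C (((1:ℕ):ℂ)+1) * pP α 1 * (qP α).derivative)).eval
        (Complex.exp (x : ℂ)) = (pP α 2).eval (Complex.exp (x : ℂ)) := by
    simp only [pP, qP, derivative_add, derivative_mul, derivative_C, derivative_X,
      derivative_X_pow, eval_add, eval_mul, eval_sub, eval_pow, eval_X, eval_C,
      Nat.cast_zero, Nat.cast_one, Nat.cast_ofNat, zero_mul, mul_zero, zero_add, add_zero,
      mul_one, one_mul]
    ring
  rw [hval] at h
  exact h.comp_ofReal

set_option maxHeartbeats 1000000 in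
lemma SS_hd2 (α : ℝ) (x : ℝ) : HasDerivAt (RS α 2) (RS α 3 x) x := by
  have h := SS_key (qP α) (pP α 2) 2 (x : ℂ) (SS_qPne α x)
  have hval : (X * ((pP α 2).derivative * qP α - C (((2:ℕ):ℂ)+1) * pP α 2 * (qP α).derivative)).eval
        (Complex.exp (x : ℂ)) = (pP α 3).eval (Complex.exp (x : ℂ)) := by
    simp only [pP, qP, derivative_add, derivative_mul, derivative_C, derivative_X,
      derivative_X_pow, eval_add, eval_mul, eval_sub, eval_pow, eval_X, eval_C,
      Nat.cast_zero, Nat.cast_one, Nat.cast_ofNat, zero_mul, mul_zero, zero_add, add_zero,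
      mul_one, one_mul]
    ring
  rw [hval] at h
  exact h.comp_ofReal

set_option maxHeartbeats 1000000 in
lemma SS_Q_eq (α : ℝ) : QSS1 α = RS α 0 := by
  funext x
  unfold QSS1 RS etaSS1
  set c := Complex.exp (x : ℂ) with hcdef
  have hc : c ≠ 0 := Complex.exp_ne_zero _
  set m := ((Complex.normSq ((α : ℂ) / ((α : ℂ) + Complex.I)) : ℝ) : ℂ) with hmdef
  have h2 : Complex.exp (2 * (x : ℂ)) = c ^ 2 := by
    rw [two_mul, Complex.exp_add]; ring
  have hneg : Complex.exp (-(x : ℂ)) = c⁻¹ := Complex.exp_neg _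
  have hneg2 : Complex.exp (-(2 * (x : ℂ))) = (c ^ 2)⁻¹ := by
    rw [Complex.exp_neg, h2]
  have hB : (qP α).eval c ≠ 0 := SS_qPne α x
  have hBe : (qP α).eval c = ((α:ℂ)^2+1) * c^4 + (2 + 2*(α:ℂ)^2) * c^2 + (α:ℂ)^2 := by
    simp only [qP, eval_add, eval_mul, eval_pow, eval_X, eval_C]
    ring
  have h3 := SS_h3 α
  have hm : m = (α:ℂ)^2/((α:ℂ)^2+1) := SS_hm2 α
  have hA : c ^ 2 + 2 + m * (c ^ 2)⁻¹ ≠ 0 := by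
    intro h
    apply hB
    have h9 : (c ^ 2 + 2 + m * (c ^ 2)⁻¹) * (c ^ 2 * ((α:ℂ)^2+1)) = (qP α).eval c := by
      rw [hBe, hm]
      field_simp
      ring
    rw [← h9, h, zero_mul]
  rw [h2, hneg, hneg2]
  simp only [pP, eval_add, eval_mul, eval_pow, eval_X, eval_C, zero_add, pow_one]
  rw [div_eq_div_iff hA hB, hBe, hm, SS_heta2 α]
  field_simp
  ring


lemma SS_qPreal (α : ℝ) (x : ℝ) :
    (qP α).eval (Complex.exp (x : ℂ))
      = (((α^2+1) * ((Real.exp x)^4 + 2*(Real.exp x)^2) + α^2 : ℝ) : ℂ) := by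
  simp only [qP, eval_add, eval_mul, eval_pow, eval_X, eval_C, ← Complex.ofReal_exp]
  push_cast
  ring

lemma SS_shape {B p0 q0 p1 q1 p2 p3 A : ℂ} (hB : B ≠ 0) :
    p3 / B^(3+1) + 9 * (p0 / B^(0+1)) * (q0 / B^(0+1)) * (p1 / B^(1+1))
      + 3 * (p0 / B^(0+1))^2 * (q1 / B^(1+1)) - p1 / B^(1+1)
      + 3 * Complex.I * A * (p2 / B^(2+1) - p0 / B^(0+1) + 2 * (p0 / B^(0+1))^2 * (q0 / B^(0+1)))
    = (p3 + 9*p0*q0*p1 + 3*p0^2*q1 - p1*B^2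
        + 3*Complex.I*A*(p2*B - p0*B^3 + 2*p0^2*q0*B)) / B^4 := by
  linear_combination (p1 * B⁻¹^2 * (B*B⁻¹ + 1) - 3*Complex.I*A*p2*B⁻¹^3
    + 3*Complex.I*A*p0*B⁻¹*(B^2*B⁻¹^2 + B*B⁻¹ + 1)
    - 6*Complex.I*A*p0^2*q0*B⁻¹^3) * (mul_inv_cancel₀ hB)

set_option maxRecDepth 100000 in
set_option maxHeartbeats 4000000 in
/-- The Sasa–Satsuma profile satisfies the third-order complex ODE
`Q''' + 9QQ̄Q' + 3Q²Q̄' - Q' + 3iα(Q'' - Q + 2Q²Q̄) = 0`. -/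
theorem stmt_16 (α : ℝ) (hα : 0 < α) :
    ∀ x : ℝ,
      iteratedDeriv 3 (QSS1 α) x
        + 9 * QSS1 α x * (starRingEnd ℂ) (QSS1 α x) * iteratedDeriv 1 (QSS1 α) x
        + 3 * (QSS1 α x) ^ 2 * (starRingEnd ℂ) (iteratedDeriv 1 (QSS1 α) x)
        - iteratedDeriv 1 (QSS1 α) x
        + 3 * Complex.I * (α : ℂ) *
            (iteratedDeriv 2 (QSS1 α) x - QSS1 α x
              + 2 * (QSS1 α x) ^ 2 * (starRingEnd ℂ) (QSS1 α x)) = 0 := by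
  intro x
  have hd1 : deriv (QSS1 α) = RS α 1 := funext fun y => by
    rw [SS_Q_eq]; exact (SS_hd0 α y).deriv
  have hd2 : deriv (RS α 1) = RS α 2 := funext fun y => (SS_hd1 α y).deriv
  have hd3 : deriv (RS α 2) = RS α 3 := funext fun y => (SS_hd2 α y).deriv
  have e1 : iteratedDeriv 1 (QSS1 α) = RS α 1 := by rw [iteratedDeriv_one, hd1]
  have e2 : iteratedDeriv 2 (QSS1 α) = RS α 2 := by
    rw [show (2:ℕ) = 1+1 from rfl, iteratedDeriv_succ, e1, hd2]
  have e3 : iteratedDeriv 3 (QSS1 α) = RS α 3 := by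
    rw [show (3:ℕ) = 2+1 from rfl, iteratedDeriv_succ, e2, hd3]
  rw [e1, e2, e3, SS_Q_eq]
  have hB : (qP α).eval (Complex.exp (x : ℂ)) ≠ 0 := SS_qPne α x
  have hqc : (starRingEnd ℂ) ((qP α).eval (Complex.exp (x : ℂ)))
      = (qP α).eval (Complex.exp (x : ℂ)) := by
    rw [SS_qPreal, Complex.conj_ofReal]
  have hnum0 : (pP α 3).eval (Complex.exp (x : ℂ))
      + 9*((pP α 0).eval (Complex.exp (x : ℂ)))*((starRingEnd ℂ) ((pP α 0).eval (Complex.exp (x : ℂ))))*((pP α 1).eval (Complex.exp (x : ℂ)))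
      + 3*((pP α 0).eval (Complex.exp (x : ℂ)))^2*((starRingEnd ℂ) ((pP α 1).eval (Complex.exp (x : ℂ))))
      - ((pP α 1).eval (Complex.exp (x : ℂ)))*((qP α).eval (Complex.exp (x : ℂ)))^2
      + 3*Complex.I*((α:ℝ):ℂ)*(((pP α 2).eval (Complex.exp (x : ℂ)))*((qP α).eval (Complex.exp (x : ℂ)))
          - ((pP α 0).eval (Complex.exp (x : ℂ)))*((qP α).eval (Complex.exp (x : ℂ)))^3
          + 2*((pP α 0).eval (Complex.exp (x : ℂ)))^2*((starRingEnd ℂ) ((pP α 0).eval (Complex.exp (x : ℂ))))*((qP α).eval (Complex.exp (x : ℂ)))) = 0 := by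
    simp only [pP, qP, eval_add, eval_mul, eval_pow, eval_X, eval_C, ← Complex.ofReal_exp]
    simp only [map_add, map_sub, map_mul, map_pow, map_ofNat, map_one, map_neg,
      Complex.conj_I, Complex.conj_ofReal]
    linear_combination SS_num_zero ((Real.exp x : ℝ) : ℂ) ((α:ℝ) : ℂ)
  simp only [RS]
  simp only [map_div₀, map_pow, hqc]
  rw [SS_shape hB, hnum0, zero_div]
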